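/- arXiv:2503.00406 — 2 statements merged into one kernel-verified Lean document; each statement's English description precedes it below -/
import Mathlib

section
/- If a graph G with finite chromatic number admits an independent efficient dominating set U, then for all k ∈ ℤ and n ∈ ℤ⁺, χ_{n,k}(G) exists and χ(G) ≤ χ_{n,k}(G) ≤ χ(G) + 1. -/
open SimpleGraph

def ClosedColoring {V : Type*} (G : SimpleGraph V) [G.LocallyFinite]
    (n k : ℤ) (ℓ : V → ℤ) : Prop :=
  ∀ v : V, (ℓ v + ∑ u ∈ G.neighborFinset v, ℓ u) ≡ k [ZMOD n]

def ProperLabeling {V : Type*} (G : SimpleGraph V) (ℓ : V → ℤ) : Prop :=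
  ∀ ⦃v w : V⦄, G.Adj v w → ℓ v ≠ ℓ w

def HasClosedChrom {V : Type*} (G : SimpleGraph V) [G.LocallyFinite]
    (n k : ℤ) (c : ℕ) : Prop :=
  (∃ ℓ : V → ℤ, ProperLabeling G ℓ ∧ ClosedColoring G n k ℓ ∧
      (Set.range ℓ).Finite ∧ (Set.range ℓ).ncard = c) ∧
  ∀ ℓ : V → ℤ, ProperLabeling G ℓ → ClosedColoring G n k ℓ →
      (Set.range ℓ).Finite → c ≤ (Set.range ℓ).ncard

def IsIEDS {V : Type*} (G : SimpleGraph V) (U : Set V) : Prop :=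
  ∀ v : V, ∃! u : V, u ∈ U ∧ u ∈ insert v (G.neighborSet v)

open Set Function

/-!
Colour `G` properly with `χ` colours and recolour the independent set `U` with a fresh colour.
Realise colour `i` by the label `n (i + 1)` and the fresh colour by `k % n`: these labels are
distinct, and modulo `n` the labelling is the indicator of `U` with value `k`. Since every closed
neighbourhood meets `U` exactly once, all closed neighbourhood sums are `≡ k`. This gives a labelling
with at most `χ + 1` labels; conversely any proper labelling with finitely many labels is a colouring.
-/

section

variable {V : Type*} {G : SimpleGraph V}

theorem ProperLabeling.chromaticNumber_le_ncard {ℓ : V → ℤ} (hp : ProperLabeling G ℓ)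
    (hf : (range ℓ).Finite) : G.chromaticNumber ≤ (range ℓ).ncard := by
  have := hf.fintype
  let C : G.Coloring (range ℓ) :=
    Coloring.mk (fun v => ⟨ℓ v, v, rfl⟩) fun hadj heq => hp hadj (congrArg Subtype.val heq)
  rw [← Nat.card_coe_set_eq, Nat.card_eq_fintype_card]
  exact C.colorable.chromaticNumber_le

theorem SimpleGraph.Coloring.properLabeling_comp {α : Type*} (C : G.Coloring α) {g : α → ℤ}
    (hg : Injective g) : ProperLabeling G (g ∘ C) :=
  fun _ _ hadj heq => C.valid hadj (hg heq)

section LocallyFinite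

variable [G.LocallyFinite] {n k : ℤ}

theorem ClosedColoring.of_modEq {f g : V → ℤ} (hf : ClosedColoring G n k f)
    (hgf : ∀ v, g v ≡ f v [ZMOD n]) : ClosedColoring G n k g :=
  fun v => ((hgf v).add (Int.ModEq.sum fun u _ => hgf u)).trans (hf v)

theorem HasClosedChrom.chromaticNumber_le {c : ℕ} (h : HasClosedChrom G n k c) :
    G.chromaticNumber ≤ c := by
  obtain ⟨⟨ℓ, hp, -, hf, rfl⟩, -⟩ := h
  exact hp.chromaticNumber_le_ncard hf

theorem exists_hasClosedChrom_le {ℓ : V → ℤ} (hp : ProperLabeling G ℓ)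
    (hc : ClosedColoring G n k ℓ) (hf : (range ℓ).Finite) :
    ∃ c, HasClosedChrom G n k c ∧ c ≤ (range ℓ).ncard := by
  classical
  have hex : ∃ m : ℕ, ∃ ℓ' : V → ℤ, ProperLabeling G ℓ' ∧ ClosedColoring G n k ℓ' ∧
      (range ℓ').Finite ∧ (range ℓ').ncard = m :=
    ⟨_, ℓ, hp, hc, hf, rfl⟩
  exact ⟨Nat.find hex, ⟨Nat.find_spec hex, fun ℓ' hp' hc' hf' => Nat.find_min' hex
    ⟨ℓ', hp', hc', hf', rfl⟩⟩, Nat.find_min' hex ⟨ℓ, hp, hc, hf, rfl⟩⟩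

end LocallyFinite

namespace IsIEDS

variable {U : Set V}

theorem isIndepSet (hU : IsIEDS G U) : G.IsIndepSet U := by
  intro u hu w hw hne hadj
  obtain ⟨x, -, hx⟩ := hU u
  exact hne ((hx u ⟨hu, mem_insert u _⟩).trans (hx w ⟨hw, mem_insert_of_mem _ hadj⟩).symm)

theorem indicator_add_sum_neighborFinset [G.LocallyFinite] {M : Type*} [AddCommMonoid M]
    (hU : IsIEDS G U) (v : V) (a : M) :
    U.indicator (fun _ => a) v + ∑ u ∈ G.neighborFinset v, U.indicator (fun _ => a) u = a := by
  classical
  obtain ⟨u₀, hu₀, huniq⟩ := hU v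
  have hfilter : (insert v (G.neighborFinset v)).filter (· ∈ U) = {u₀} := by
    ext u
    simp only [Finset.mem_filter, Finset.mem_insert, mem_neighborFinset, Finset.mem_singleton]
    exact ⟨fun h => huniq u ⟨h.2, h.1⟩, fun h => h ▸ ⟨hu₀.2, hu₀.1⟩⟩
  rw [← Finset.sum_insert (G.notMem_neighborFinset_self v)]
  simp only [indicator_apply]
  rw [← Finset.sum_filter, hfilter, Finset.sum_singleton]

theorem closedColoring_indicator [G.LocallyFinite] (hU : IsIEDS G U) (n k : ℤ) :
    ClosedColoring G n k (U.indicator fun _ => k) :=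
  fun v => by rw [hU.indicator_add_sum_neighborFinset v k]

end IsIEDS

section

variable {α : Type*} {U : Set V}

open Classical in
noncomputable def SimpleGraph.Coloring.optionOfIndepSet (C : G.Coloring α) (hU : G.IsIndepSet U) :
    G.Coloring (Option α) :=
  Coloring.mk (fun v => if v ∈ U then none else some (C v)) fun {v w} hadj heq => by
    by_cases hv : v ∈ U <;> by_cases hw : w ∈ U <;> simp only [hv, hw, if_true, if_false,
      reduceCtorEq, Option.some.injEq] at heq
    · exact hU hv hw hadj.ne hadj
    · exact C.valid hadj heq

theorem SimpleGraph.Coloring.optionOfIndepSet_of_mem (C : G.Coloring α) (hU : G.IsIndepSet U)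
    {v : V} (hv : v ∈ U) : C.optionOfIndepSet hU v = none :=
  if_pos hv

theorem SimpleGraph.Coloring.optionOfIndepSet_of_notMem (C : G.Coloring α) (hU : G.IsIndepSet U)
    {v : V} (hv : v ∉ U) : C.optionOfIndepSet hU v = some (C v) :=
  if_neg hv

def optionLabel {m : ℕ} (n k : ℤ) : Option (Fin m) → ℤ
  | none => k % n
  | some i => n * (i + 1)

theorem optionLabel_injective {m : ℕ} {n : ℤ} (hn : 0 < n) (k : ℤ) :
    Injective (optionLabel (m := m) n k) := by
  have hlt : ∀ i : Fin m, k % n < n * (i + 1) := fun i =>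
    (Int.emod_lt_of_pos k hn).trans_le (le_mul_of_one_le_right hn.le (by omega))
  rintro (_ | i) (_ | j) h <;> simp only [optionLabel] at h
  · rfl
  · exact absurd h (hlt j).ne
  · exact absurd h.symm (hlt i).ne
  · rw [mul_right_inj' hn.ne', add_left_inj, Nat.cast_inj, Fin.val_inj] at h
    rw [h]

theorem optionLabel_optionOfIndepSet_modEq {m : ℕ} (C : G.Coloring (Fin m))
    (hU : G.IsIndepSet U) (n k : ℤ) (v : V) :
    optionLabel n k (C.optionOfIndepSet hU v) ≡ U.indicator (fun _ => k) v [ZMOD n] := by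
  by_cases hv : v ∈ U
  · rw [C.optionOfIndepSet_of_mem hU hv, indicator_of_mem hv]
    exact Int.mod_modEq k n
  · rw [C.optionOfIndepSet_of_notMem hU hv, indicator_of_notMem hv]
    exact Int.modEq_zero_iff_dvd.mpr (dvd_mul_right n _)

end

theorem ncard_range_comp_le {α β γ : Type*} [Finite β] (g : β → γ) (c : α → β) :
    (range (g ∘ c)).ncard ≤ Nat.card β :=
  (ncard_le_ncard (range_comp_subset_range c g)).trans
    ((Nat.card_coe_set_eq _).symm.le.trans (Finite.card_range_le g))

end

theorem chi_of_IEDS {V : Type*} (G : SimpleGraph V) [G.LocallyFinite]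
    (U : Set V) (hU : IsIEDS G U) (χ : ℕ) (hχ : G.chromaticNumber = χ)
    (k : ℤ) (n : ℕ) (hn : 0 < n) :
    ∃ c : ℕ, HasClosedChrom G n k c ∧ χ ≤ c ∧ c ≤ χ + 1 := by
  obtain ⟨C⟩ : G.Colorable χ := chromaticNumber_le_iff_colorable.mp hχ.le
  set D := C.optionOfIndepSet hU.isIndepSet
  set ℓ := optionLabel n k ∘ D
  have hproper : ProperLabeling G ℓ := D.properLabeling_comp (optionLabel_injective (by omega) k)
  have hclosed : ClosedColoring G n k ℓ := (hU.closedColoring_indicator n k).of_modEq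
    (optionLabel_optionOfIndepSet_modEq C hU.isIndepSet n k)
  have hfin : (range ℓ).Finite := (finite_range _).subset (range_comp_subset_range _ _)
  have hcard : (range ℓ).ncard ≤ χ + 1 := by
    simpa using ncard_range_comp_le (optionLabel (m := χ) n k) D
  obtain ⟨c, hc, hle⟩ := exists_hasClosedChrom_le hproper hclosed hfin
  refine ⟨c, hc, ?_, hle.trans hcard⟩
  exact_mod_cast hχ ▸ hc.chromaticNumber_le
end

section
/- For the infinite complete m-ary rooted tree T_m, χ_{n,k}(T_m) = 2 if n divides mk, and χ_{n,k}(T_m) = 3 otherwise. -/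
open SimpleGraph

/-- The complete m-ary rooted tree of infinite height: vertices are finite
words over `Fin m` (the root is `[]`), and each vertex `v` is adjacent to its
m children `a :: v`. -/
def mAryTree (m : ℕ) : SimpleGraph (List (Fin m)) :=
  SimpleGraph.fromRel (fun v w => ∃ a : Fin m, w = a :: v)

noncomputable instance (m : ℕ) : (mAryTree m).LocallyFinite := fun v => by
  apply Set.Finite.fintype
  apply Set.Finite.subset
    ((Set.finite_range (fun a : Fin m => a :: v)).union (Set.finite_singleton v.tail))
  intro w hw
  rw [SimpleGraph.mem_neighborSet, mAryTree, SimpleGraph.fromRel_adj] at hw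
  rcases hw.2 with ⟨a, rfl⟩ | ⟨a, h⟩
  · exact Or.inl ⟨a, rfl⟩
  · exact Or.inr (by simp [h])

/-!
A proper labeling uses at least two labels along any edge. With exactly two labels `x, y`,
properness makes them alternate with depth, and the closed-neighbourhood conditions at the root
and at the next two vertices of a branch give `y ≡ 0`, `x ≡ k` and then `m k ≡ 0 (mod n)`.

Conversely, if `n ∣ m k`, label even depths by some `X ≡ k` with `X ≠ 0` and odd depths by `0`:
an odd vertex sees `(1 + m) X ≡ k`. If `n ∤ m k`, then `n ∤ k`; take a perfect code of the tree
(a set meeting every closed neighbourhood exactly once), label it by `k % n`, and label the other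
vertices `0` or `n` by depth parity. Modulo `n` this is `k` times the indicator of the code.
-/

open Finset

section ClosedNbhdSum

variable {V M : Type*} (G : SimpleGraph V) [G.LocallyFinite]

def closedNbhdSum [AddCommMonoid M] (f : V → M) (v : V) : M :=
  f v + ∑ u ∈ G.neighborFinset v, f u

theorem map_closedNbhdSum {N : Type*} [AddCommMonoid M] [AddCommMonoid N] (φ : M →+ N)
    (f : V → M) (v : V) : φ (closedNbhdSum G f v) = closedNbhdSum G (φ ∘ f) v := by
  simp [closedNbhdSum, map_sum]

theorem closedColoring_iff_zmod (n : ℕ) (k : ℤ) (ℓ : V → ℤ) :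
    ClosedColoring G n k ℓ ↔ ∀ v, closedNbhdSum G (fun u => (ℓ u : ZMod n)) v = k := by
  refine forall_congr' fun v => ?_
  rw [← ZMod.intCast_eq_intCast_iff]
  exact Eq.congr_left (map_closedNbhdSum G (Int.castAddHom (ZMod n)) ℓ v)

end ClosedNbhdSum

theorem ProperLabeling.two_le_ncard_range {V : Type*} {G : SimpleGraph V} {ℓ : V → ℤ}
    (hℓ : ProperLabeling G ℓ) (hfin : (Set.range ℓ).Finite) {v w : V} (hvw : G.Adj v w) :
    2 ≤ (Set.range ℓ).ncard :=
  (Set.one_lt_ncard_iff hfin).2 ⟨_, _, ⟨v, rfl⟩, ⟨w, rfl⟩, hℓ hvw⟩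

section Tree

variable {m : ℕ} {M : Type*} [AddCommMonoid M]

theorem mAryTree_adj {v w : List (Fin m)} :
    (mAryTree m).Adj v w ↔ (∃ a, w = a :: v) ∨ ∃ a, v = a :: w := by
  rw [mAryTree, fromRel_adj, and_iff_right_iff_imp]
  rintro (⟨a, rfl⟩ | ⟨a, rfl⟩) <;> simp

theorem mAryTree_adj_cons (v : List (Fin m)) (a : Fin m) : (mAryTree m).Adj v (a :: v) :=
  mAryTree_adj.2 (.inl ⟨a, rfl⟩)

theorem properLabeling_mAryTree_iff {ℓ : List (Fin m) → ℤ} :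
    ProperLabeling (mAryTree m) ℓ ↔ ∀ v a, ℓ (a :: v) ≠ ℓ v := by
  refine ⟨fun h v a => (h (mAryTree_adj_cons v a)).symm, fun h v w hvw => ?_⟩
  rcases mAryTree_adj.1 hvw with ⟨a, rfl⟩ | ⟨a, rfl⟩
  exacts [(h v a).symm, h w a]

theorem neighborFinset_mAryTree_nil :
    (mAryTree m).neighborFinset [] = univ.image fun a => [a] := by
  ext w
  simp [mAryTree_adj, eq_comm]

theorem neighborFinset_mAryTree_cons (b : Fin m) (t : List (Fin m)) :
    (mAryTree m).neighborFinset (b :: t) = insert t (univ.image fun a => a :: b :: t) := by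
  ext w
  simp [mAryTree_adj, eq_comm, or_comm]

theorem closedNbhdSum_mAryTree_nil (f : List (Fin m) → M) :
    closedNbhdSum (mAryTree m) f [] = f [] + ∑ a, f [a] := by
  rw [closedNbhdSum, neighborFinset_mAryTree_nil,
    sum_image fun a _ b _ h => List.head_eq_of_cons_eq h]

theorem closedNbhdSum_mAryTree_cons (f : List (Fin m) → M) (b : Fin m) (t : List (Fin m)) :
    closedNbhdSum (mAryTree m) f (b :: t) = f (b :: t) + (f t + ∑ a, f (a :: b :: t)) := by
  have ht : t ∉ univ.image fun a => a :: b :: t := by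
    simp only [mem_image, mem_univ, true_and, not_exists]
    exact fun a h => absurd (congrArg List.length h) (by simp only [List.length_cons]; omega)
  rw [closedNbhdSum, neighborFinset_mAryTree_cons, sum_insert ht,
    sum_image fun a _ c _ h => List.head_eq_of_cons_eq h]

end Tree

section EvenDepth

variable {m : ℕ}

def evenDepthLabeling (X : ℤ) (v : List (Fin m)) : ℤ := if Even v.length then X else 0

theorem properLabeling_evenDepthLabeling {X : ℤ} (hX : X ≠ 0) :
    ProperLabeling (mAryTree m) (evenDepthLabeling X) := by
  refine properLabeling_mAryTree_iff.2 fun v a => ?_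
  by_cases h : Even v.length <;> simp [evenDepthLabeling, h, Nat.even_add_one, hX, hX.symm]

theorem closedColoring_evenDepthLabeling {n : ℕ} {k X : ℤ} (hX : X ≡ k [ZMOD n])
    (hdvd : (n : ℤ) ∣ m * k) : ClosedColoring (mAryTree m) n k (evenDepthLabeling X) := by
  rw [← ZMod.intCast_eq_intCast_iff] at hX
  have hmk : (m : ZMod n) * k = 0 := by
    exact_mod_cast (ZMod.intCast_zmod_eq_zero_iff_dvd _ n).2 hdvd
  rw [closedColoring_iff_zmod]
  rintro (_ | ⟨b, t⟩)
  · simp [closedNbhdSum_mAryTree_nil, evenDepthLabeling, hX]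
  · rw [closedNbhdSum_mAryTree_cons]
    by_cases h : Even t.length
    · simpa [evenDepthLabeling, h, Nat.even_add_one, hX] using hmk
    · simp [evenDepthLabeling, h, Nat.even_add_one, hX]

theorem range_evenDepthLabeling (hm : 0 < m) {X : ℤ} :
    Set.range (evenDepthLabeling (m := m) X) = {X, 0} := by
  refine subset_antisymm ?_ ?_
  · rintro _ ⟨v, rfl⟩
    by_cases h : Even v.length <;> simp [evenDepthLabeling, h]
  · rintro _ (rfl | rfl)
    exacts [⟨[], by simp [evenDepthLabeling]⟩, ⟨[⟨0, hm⟩], by simp [evenDepthLabeling]⟩]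

theorem exists_closedColoring_ncard_range_eq_two (hm : 0 < m) {n : ℕ} (hn : 0 < n) {k : ℤ}
    (hdvd : (n : ℤ) ∣ m * k) :
    ∃ ℓ, ProperLabeling (mAryTree m) ℓ ∧ ClosedColoring (mAryTree m) n k ℓ ∧
      (Set.range ℓ).Finite ∧ (Set.range ℓ).ncard = 2 := by
  have hX : k % n + n ≠ 0 := by have := Int.emod_nonneg k (by omega : (n : ℤ) ≠ 0); omega
  refine ⟨evenDepthLabeling (k % n + n), properLabeling_evenDepthLabeling hX,
    closedColoring_evenDepthLabeling ?_ hdvd, ?_, ?_⟩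
  · exact Int.add_modEq_right.trans (Int.mod_modEq k n)
  · rw [range_evenDepthLabeling hm]; exact Set.toFinite _
  · rw [range_evenDepthLabeling hm, Set.ncard_pair hX]

end EvenDepth

section PerfectCode

inductive Dominator
  | itself
  | parent
  | child
  deriving DecidableEq

variable {m : ℕ} {M : Type*} [AddCommMonoid M]

-- The perfect code is built top-down from the root; `dominator v` records which vertex of the
-- closed neighbourhood of `v` lies in it: `v` itself, its parent, or its first child `0 :: v`.
def dominator : List (Fin m) → Dominator
  | [] => .itself
  | a :: v =>
    match dominator v with
    | .itself => .parent
    | .parent => .child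
    | .child => if a.val = 0 then .itself else .child

def codeIndicator (c : M) (v : List (Fin m)) : M := if dominator v = .itself then c else 0

theorem sum_codeIndicator_cons (hm : 0 < m) (c : M) (v : List (Fin m)) :
    ∑ a : Fin m, codeIndicator c (a :: v) = if dominator v = .child then c else 0 := by
  cases h : dominator v
  case itself | parent => simp [codeIndicator, dominator, h]
  case child =>
    rw [Fintype.sum_eq_single ⟨0, hm⟩ fun a ha => ?_]
    · simp [codeIndicator, dominator, h]
    · have ha : (a : ℕ) ≠ 0 := fun h0 => ha (Fin.ext h0)
      simp [codeIndicator, dominator, h, ha]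

theorem closedNbhdSum_codeIndicator (hm : 0 < m) (c : M) (v : List (Fin m)) :
    closedNbhdSum (mAryTree m) (codeIndicator c) v = c := by
  rcases v with _ | ⟨b, t⟩
  · rw [closedNbhdSum_mAryTree_nil, sum_codeIndicator_cons hm]
    simp [codeIndicator, dominator]
  · rw [closedNbhdSum_mAryTree_cons, sum_codeIndicator_cons hm]
    cases h : dominator t <;> by_cases hb : (b : ℕ) = 0 <;>
      simp [codeIndicator, dominator, h, hb]

def codeLabeling (K : ℤ) (n : ℕ) (v : List (Fin m)) : ℤ :=
  if dominator v = .itself then K else if Even v.length then 0 else n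

theorem intCast_codeLabeling (K : ℤ) (n : ℕ) (v : List (Fin m)) :
    (codeLabeling K n v : ZMod n) = codeIndicator (K : ZMod n) v := by
  unfold codeLabeling codeIndicator
  split_ifs <;> simp

theorem properLabeling_codeLabeling {K : ℤ} {n : ℕ} (hn : n ≠ 0) (hK₀ : K ≠ 0) (hKn : K ≠ n) :
    ProperLabeling (mAryTree m) (codeLabeling K n) := by
  refine properLabeling_mAryTree_iff.2 fun v a => ?_
  by_cases hv : Even v.length <;> cases h : dominator v <;>
    by_cases ha : (a : ℕ) = 0 <;>
    simp [codeLabeling, dominator, h, hv, ha, Nat.even_add_one, hn,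
      (Int.natCast_ne_zero.2 hn).symm, hK₀, hKn, hK₀.symm, hKn.symm]

theorem closedColoring_codeLabeling (hm : 0 < m) {K k : ℤ} {n : ℕ} (hK : K ≡ k [ZMOD n]) :
    ClosedColoring (mAryTree m) n k (codeLabeling K n) := by
  refine (closedColoring_iff_zmod _ _ _ _).2 fun v => ?_
  simp only [intCast_codeLabeling]
  rw [closedNbhdSum_codeIndicator hm]
  exact (ZMod.intCast_eq_intCast_iff K k n).2 hK

theorem range_codeLabeling (hm : 0 < m) (K : ℤ) (n : ℕ) :
    Set.range (codeLabeling (m := m) K n) = {K, 0, (n : ℤ)} := by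
  refine subset_antisymm ?_ ?_
  · rintro _ ⟨v, rfl⟩
    unfold codeLabeling
    split_ifs <;> simp
  · rintro _ (rfl | rfl | rfl)
    exacts [⟨[], by simp [codeLabeling, dominator]⟩,
      ⟨[⟨0, hm⟩, ⟨0, hm⟩], by simp [codeLabeling, dominator]⟩,
      ⟨[⟨0, hm⟩], by simp [codeLabeling, dominator]⟩]

theorem exists_closedColoring_ncard_range_eq_three (hm : 0 < m) {n : ℕ} (hn : 0 < n) {k : ℤ}
    (hk : ¬ (n : ℤ) ∣ k) :
    ∃ ℓ, ProperLabeling (mAryTree m) ℓ ∧ ClosedColoring (mAryTree m) n k ℓ ∧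
      (Set.range ℓ).Finite ∧ (Set.range ℓ).ncard = 3 := by
  have hK₀ : k % n ≠ 0 := fun h => hk (Int.dvd_of_emod_eq_zero h)
  have hKn : k % n < n := Int.emod_lt_of_pos k (by omega)
  refine ⟨codeLabeling (k % n) n, properLabeling_codeLabeling hn.ne' hK₀ hKn.ne,
    closedColoring_codeLabeling hm (Int.mod_modEq k n), ?_, ?_⟩
  · rw [range_codeLabeling hm]; exact Set.toFinite _
  · rw [range_codeLabeling hm, Set.ncard_insert_of_notMem (by simp [hK₀, hKn.ne]),
      Set.ncard_pair (by omega)]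

end PerfectCode

theorem dvd_mul_of_ncard_range_eq_two {m n : ℕ} (hm : 0 < m) {k : ℤ} {ℓ : List (Fin m) → ℤ}
    (hp : ProperLabeling (mAryTree m) ℓ) (hc : ClosedColoring (mAryTree m) n k ℓ)
    (h₂ : (Set.range ℓ).ncard = 2) : (n : ℤ) ∣ m * k := by
  set a₀ : Fin m := ⟨0, hm⟩
  obtain ⟨x, hx⟩ : ∃ x, ℓ [] = x := ⟨_, rfl⟩
  obtain ⟨y, hy⟩ : ∃ y, ℓ [a₀] = y := ⟨_, rfl⟩
  have hxy : x ≠ y := hx ▸ hy ▸ hp (mAryTree_adj_cons [] a₀)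
  have hrange : Set.range ℓ = {x, y} := by
    refine (Set.eq_of_subset_of_ncard_le ?_ ?_ (Set.finite_of_ncard_pos (by omega))).symm
    · rintro _ (rfl | rfl)
      exacts [⟨_, hx⟩, ⟨_, hy⟩]
    · rw [h₂, Set.ncard_pair hxy]
  have hchild : ∀ v a, ℓ (a :: v) = x + y - ℓ v := by
    intro v a
    have hv : ℓ v ∈ ({x, y} : Set ℤ) := hrange ▸ ⟨v, rfl⟩
    have hav : ℓ (a :: v) ∈ ({x, y} : Set ℤ) := hrange ▸ ⟨a :: v, rfl⟩
    have hne := properLabeling_mAryTree_iff.1 hp v a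
    simp only [Set.mem_insert_iff, Set.mem_singleton_iff] at hv hav
    omega
  rw [closedColoring_iff_zmod] at hc
  have e₀ := hc []
  have e₁ := hc [a₀]
  have e₂ := hc [a₀, a₀]
  simp only [closedNbhdSum_mAryTree_nil, closedNbhdSum_mAryTree_cons, hchild, hx, sum_const,
    card_univ, Fintype.card_fin, nsmul_eq_mul] at e₀ e₁ e₂
  rw [← ZMod.intCast_zmod_eq_zero_iff_dvd]
  push_cast at e₀ e₁ e₂ ⊢
  have hy₀ : (y : ZMod n) = 0 := by linear_combination e₂ - e₀
  have hxk : (x : ZMod n) = k := by linear_combination e₀ - m * hy₀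
  linear_combination e₁ - hy₀ - (1 + (m : ZMod n)) * hxk

theorem chi_mAryTree (k : ℤ) (n m : ℕ) (hn : 0 < n) (hm : 0 < m) :
    ((n : ℤ) ∣ (m : ℤ) * k → HasClosedChrom (mAryTree m) n k 2) ∧
    (¬ (n : ℤ) ∣ (m : ℤ) * k → HasClosedChrom (mAryTree m) n k 3) := by
  have two_le (ℓ : List (Fin m) → ℤ) (hp : ProperLabeling (mAryTree m) ℓ)
      (hfin : (Set.range ℓ).Finite) : 2 ≤ (Set.range ℓ).ncard :=
    hp.two_le_ncard_range hfin (mAryTree_adj_cons [] ⟨0, hm⟩)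
  refine ⟨fun hdvd => ⟨exists_closedColoring_ncard_range_eq_two hm hn hdvd,
    fun ℓ hp _ hfin => two_le ℓ hp hfin⟩, fun hndvd => ⟨?_, fun ℓ hp hc hfin => ?_⟩⟩
  · exact exists_closedColoring_ncard_range_eq_three hm hn fun hk => hndvd (hk.mul_left _)
  · have hne : (Set.range ℓ).ncard ≠ 2 := fun h₂ =>
      hndvd (dvd_mul_of_ncard_range_eq_two hm hp hc h₂)
    have := two_le ℓ hp hfin
    omega
end
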